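/- Bubble function norm equivalence: Let K be a non-degenerate simplex in ℝ^d with interior bubble function b_K (the scaled product of the d+1 barycentric coordinates, normalized so 0 ≤ b_K ≤ 1, b_K = 0 on ∂K). For each k ∈ ℕ there exist constants c₁, c₂ > 0, depending only on k and the shape-regularity of K, such that c₁ ‖φ‖_{L²(K)} ≤ ‖φ b_K^{1/2}‖_{L²(K)} ≤ c₂ ‖φ‖_{L²(K)} for all polynomials φ ∈ ℙ^k(K). -/

import Mathlib

open MeasureTheory Metric Set

noncomputable section

abbrev Evec (d : ℕ) := EuclideanSpace ℝ (Fin d)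

def pderiv' {d : ℕ} (f : Evec d → ℝ) (i : Fin d) (x : Evec d) : ℝ :=
  fderiv ℝ f x (EuclideanSpace.single i 1)

def gradM {d : ℕ} (u : Evec d → Evec d) (x : Evec d) : Matrix (Fin d) (Fin d) ℝ :=
  fun i j => fderiv ℝ u x (EuclideanSpace.single j 1) i

def symGrad {d : ℕ} (u : Evec d → Evec d) (x : Evec d) : Matrix (Fin d) (Fin d) ℝ :=
  fun i j => (gradM u x i j + gradM u x j i) / 2

def mInner {d : ℕ} (A B : Matrix (Fin d) (Fin d) ℝ) : ℝ := ∑ i, ∑ j, A i j * B i j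

def divg {d : ℕ} (u : Evec d → Evec d) (x : Evec d) : ℝ := ∑ i, gradM u x i i

def dotv {d : ℕ} (a b : Fin d → ℝ) : ℝ := ∑ i, a i * b i

def L2normSq {d : ℕ} (Ω : Set (Evec d)) (u : Evec d → Evec d) : ℝ :=
  ∫ x in Ω, ‖u x‖^2

def H1normSq {d : ℕ} (Ω : Set (Evec d)) (u : Evec d → Evec d) : ℝ :=
  ∫ x in Ω, (‖u x‖^2 + ‖fderiv ℝ u x‖^2)

def L2normSqS {d : ℕ} (Ω : Set (Evec d)) (f : Evec d → ℝ) : ℝ :=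
  ∫ x in Ω, (f x)^2

def H1normSqS {d : ℕ} (Ω : Set (Evec d)) (f : Evec d → ℝ) : ℝ :=
  ∫ x in Ω, ((f x)^2 + ‖fderiv ℝ f x‖^2)

def MemH1 {d : ℕ} (Ω : Set (Evec d)) (u : Evec d → Evec d) : Prop :=
  DifferentiableOn ℝ u Ω ∧ IntegrableOn (fun x => ‖u x‖^2) Ω ∧
    IntegrableOn (fun x => ‖fderiv ℝ u x‖^2) Ω

def MemHdiv {d : ℕ} (Ω : Set (Evec d)) (u : Evec d → Evec d) : Prop :=
  DifferentiableOn ℝ u Ω ∧ IntegrableOn (fun x => ‖u x‖^2) Ω ∧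
    IntegrableOn (fun x => (divg u x)^2) Ω

def HdivnormSq {d : ℕ} (Ω : Set (Evec d)) (u : Evec d → Evec d) : ℝ :=
  ∫ x in Ω, (‖u x‖^2 + (divg u x)^2)


/-- The element bubble function of a simplex with barycentric coordinate system
`b`: normalized product of the `d+1` barycentric coordinates. -/
def bubbleK {d : ℕ} (b : AffineBasis (Fin (d + 1)) ℝ (Evec d)) (x : Evec d) : ℝ :=
  ((d : ℝ) + 1) ^ (d + 1) * ∏ i, b.coord i x

/-!
The affine map carrying a fixed reference simplex onto `K` pulls polynomials of degree `≤ k` back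
to polynomials of degree `≤ k` and `b_K` back to the reference bubble, and it multiplies both
integrals by the same Jacobian. So the lower constant may be computed on the reference simplex,
where it exists because both sides are continuous quadratic forms on the finite-dimensional space
`ℙ^k` and the weighted one is positive definite: the bubble is positive in the interior, and a
polynomial vanishing on an open set is zero. The upper bound holds with `c₂ = 1` because
`b_K ≤ 1`, which is AM-GM for the barycentric coordinates.
-/

open Finset in
theorem Real.prod_le_inv_card_pow_of_sum_eq_one {ι : Type*} (s : Finset ι) {z : ι → ℝ}
    (hz : ∀ i ∈ s, 0 ≤ z i) (hsum : ∑ i ∈ s, z i = 1) :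
    ∏ i ∈ s, z i ≤ ((#s : ℝ)⁻¹) ^ #s := by
  have hs : s.Nonempty := nonempty_of_sum_ne_zero (by rw [hsum]; exact one_ne_zero)
  have hcard : (0 : ℝ) < #s := by exact_mod_cast hs.card_pos
  have amgm := Real.geom_mean_le_arith_mean s (fun _ => 1) z (fun _ _ => zero_le_one)
    (by simpa using hcard) hz
  simp only [Real.rpow_one, one_mul, sum_const, nsmul_eq_mul, mul_one, hsum] at amgm
  calc ∏ i ∈ s, z i = ((∏ i ∈ s, z i) ^ (#s : ℝ)⁻¹) ^ #s :=
        (Real.rpow_inv_natCast_pow (prod_nonneg hz) hs.card_pos.ne').symm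
    _ ≤ ((#s : ℝ)⁻¹) ^ #s := by
        gcongr
        · exact Real.rpow_nonneg (prod_nonneg hz) _
        · simpa using amgm

namespace AffineBasis

variable {ι k V₁ V₂ P₁ P₂ : Type*} [Fintype ι] [Ring k]
  [AddCommGroup V₁] [Module k V₁] [AddTorsor V₁ P₁]
  [AddCommGroup V₂] [Module k V₂] [AddTorsor V₂ P₂]

def transport (b₀ : AffineBasis ι k P₁) (b : AffineBasis ι k P₂) : P₁ →ᵃ[k] P₂ :=
  (Finset.univ.affineCombination k b).comp b₀.coords

variable (b₀ : AffineBasis ι k P₁) (b : AffineBasis ι k P₂)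

@[simp]
theorem coord_transport (i : ι) (x : P₁) : b.coord i (b₀.transport b x) = b₀.coord i x :=
  b.coord_apply_combination_of_mem (Finset.mem_univ i) (b₀.sum_coord_apply_eq_one x)

@[simp]
theorem transport_apply_self (j : ι) : b₀.transport b (b₀ j) = b j := by
  classical
  exact b.ext_elem fun i => by simp [coord_apply]

theorem transport_injective : Function.Injective (b₀.transport b) := fun x y h =>
  b₀.ext_elem fun i => by rw [← coord_transport b₀ b, h, coord_transport]

end AffineBasis

theorem AffineBasis.image_transport_convexHull {ι 𝕜 V₁ V₂ : Type*} [Fintype ι] [Field 𝕜]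
    [LinearOrder 𝕜] [IsStrictOrderedRing 𝕜] [AddCommGroup V₁] [Module 𝕜 V₁]
    [AddCommGroup V₂] [Module 𝕜 V₂] (b₀ : AffineBasis ι 𝕜 V₁) (b : AffineBasis ι 𝕜 V₂) :
    b₀.transport b '' convexHull 𝕜 (range b₀) = convexHull 𝕜 (range b) := by
  rw [AffineMap.image_convexHull, ← range_comp]
  congr 2
  exact funext (b₀.transport_apply_self b)

section Bubble

variable {d : ℕ} {b : AffineBasis (Fin (d + 1)) ℝ (Evec d)} {x : Evec d}

theorem bubbleK_nonneg (hx : x ∈ convexHull ℝ (range b)) : 0 ≤ bubbleK b x := by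
  rw [b.convexHull_eq_nonneg_coord] at hx
  exact mul_nonneg (by positivity) (Finset.prod_nonneg fun i _ => hx i)

theorem bubbleK_le_one (hx : x ∈ convexHull ℝ (range b)) : bubbleK b x ≤ 1 := by
  rw [b.convexHull_eq_nonneg_coord] at hx
  have amgm := Real.prod_le_inv_card_pow_of_sum_eq_one Finset.univ (fun i _ => hx i)
    (b.sum_coord_apply_eq_one x)
  simp only [Finset.card_univ, Fintype.card_fin, Nat.cast_add, Nat.cast_one] at amgm
  calc bubbleK b x ≤ ((d : ℝ) + 1) ^ (d + 1) * (((d : ℝ) + 1)⁻¹) ^ (d + 1) :=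
        mul_le_mul_of_nonneg_left amgm (by positivity)
    _ = 1 := by rw [← mul_pow, mul_inv_cancel₀ (by positivity), one_pow]

theorem bubbleK_pos (hx : x ∈ interior (convexHull ℝ (range b))) : 0 < bubbleK b x := by
  rw [b.interior_convexHull] at hx
  exact mul_pos (by positivity) (Finset.prod_pos fun i _ => hx i)

theorem continuous_bubbleK (b : AffineBasis (Fin (d + 1)) ℝ (Evec d)) :
    Continuous (bubbleK b) :=
  continuous_const.mul (continuous_finsetProd _ fun i _ => continuous_barycentric_coord b i)

theorem bubbleK_transport (b₀ b : AffineBasis (Fin (d + 1)) ℝ (Evec d)) (x : Evec d) :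
    bubbleK b (b₀.transport b x) = bubbleK b₀ x := by
  simp [bubbleK]

end Bubble

theorem MeasureTheory.integral_image_affineMap {E F : Type*} [NormedAddCommGroup E]
    [NormedSpace ℝ E] [FiniteDimensional ℝ E] [MeasurableSpace E] [BorelSpace E]
    (μ : Measure E) [μ.IsAddHaarMeasure] [NormedAddCommGroup F] [NormedSpace ℝ F]
    {s : Set E} (hs : MeasurableSet s) {A : E →ᵃ[ℝ] E} (hA : Function.Injective A)
    (g : E → F) :
    ∫ x in A '' s, g x ∂μ = |LinearMap.det A.linear| • ∫ x in s, g (A x) ∂μ := by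
  let A' : E →ᴬ[ℝ] E := ⟨A, A.continuous_of_finiteDimensional⟩
  exact (integral_image_eq_integral_abs_det_fderiv_smul μ hs (f := A')
    (fun x _ => A'.hasFDerivWithinAt) hA.injOn g).trans (integral_smul _ _)

theorem exists_le_mul_of_sq_homogeneous {E : Type*} [NormedAddCommGroup E] [NormedSpace ℝ E]
    [FiniteDimensional ℝ E] {f g : E → ℝ} (hf : Continuous f) (hg : Continuous g)
    (hf_smul : ∀ (t : ℝ) x, f (t • x) = t ^ 2 * f x)
    (hg_smul : ∀ (t : ℝ) x, g (t • x) = t ^ 2 * g x) (hg_pos : ∀ x ≠ 0, 0 < g x) :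
    ∃ C > 0, ∀ x, f x ≤ C * g x := by
  obtain ⟨M, hM⟩ := (isCompact_sphere (0 : E) 1).bddAbove_image <|
    hf.continuousOn.div hg.continuousOn fun u hu => (hg_pos u (ne_of_mem_sphere hu one_ne_zero)).ne'
  refine ⟨max M 1, by positivity, fun x => ?_⟩
  rcases eq_or_ne x 0 with rfl | hx
  · have hf0 : f 0 = 0 := by simpa using hf_smul 0 0
    have hg0 : g 0 = 0 := by simpa using hg_smul 0 0
    simp [hf0, hg0]
  set u := ‖x‖⁻¹ • x
  have hu : u ∈ sphere (0 : E) 1 := by simp [u, norm_smul, hx]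
  have hxu : x = ‖x‖ • u := by simp [u, smul_smul, hx]
  have hratio : f u ≤ max M 1 * g u := by
    rw [← div_le_iff₀ (hg_pos u (ne_of_mem_sphere hu one_ne_zero))]
    exact (hM (mem_image_of_mem _ hu)).trans (le_max_left _ _)
  have hgx : g x = ‖x‖ ^ 2 * g u := by rw [← hg_smul, ← hxu]
  calc f x = ‖x‖ ^ 2 * f u := by rw [← hf_smul, ← hxu]
    _ ≤ ‖x‖ ^ 2 * (max M 1 * g u) := by gcongr
    _ = max M 1 * g x := by rw [hgx]; ring

namespace MvPolynomial

theorem totalDegree_aeval_le {σ τ R : Type*} [CommSemiring R] {g : σ → MvPolynomial τ R}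
    {m : ℕ} (hg : ∀ i, (g i).totalDegree ≤ m) (P : MvPolynomial σ R) :
    (aeval g P).totalDegree ≤ m * P.totalDegree := by
  conv_lhs => rw [P.as_sum, map_sum]
  refine (totalDegree_finsetSum _ _).trans (Finset.sup_le fun s hs => ?_)
  rw [aeval_monomial, algebraMap_eq]
  refine (totalDegree_mul _ _).trans ?_
  rw [totalDegree_C, zero_add, Finsupp.prod]
  refine (totalDegree_finsetProd _ _).trans ?_
  calc ∑ i ∈ s.support, (g i ^ s i).totalDegree ≤ ∑ i ∈ s.support, m * s i :=
        Finset.sum_le_sum fun i _ =>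
          (totalDegree_pow _ _).trans (by rw [mul_comm]; gcongr; exact hg i)
    _ = m * s.sum fun _ e => e := by rw [Finsupp.sum, Finset.mul_sum]
    _ ≤ m * P.totalDegree := Nat.mul_le_mul_left _ (le_totalDegree hs)

end MvPolynomial

section EvalEuclidean

variable {d : ℕ}

def evalEuclidean (P : MvPolynomial (Fin d) ℝ) (x : Evec d) : ℝ :=
  MvPolynomial.eval (fun i => x i) P

theorem analyticOnNhd_evalEuclidean (P : MvPolynomial (Fin d) ℝ) :
    AnalyticOnNhd ℝ (evalEuclidean P) univ :=
  AnalyticOnNhd.eval_continuousLinearMap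
    (PiLp.continuousLinearEquiv 2 ℝ (fun _ : Fin d => ℝ) : Evec d →L[ℝ] (Fin d → ℝ)) P

theorem continuous_evalEuclidean (P : MvPolynomial (Fin d) ℝ) :
    Continuous (evalEuclidean P) :=
  continuousOn_univ.mp (analyticOnNhd_evalEuclidean P).continuousOn

theorem eq_zero_of_evalEuclidean_eqOn_zero {P : MvPolynomial (Fin d) ℝ} {U : Set (Evec d)}
    (hU : IsOpen U) (hne : U.Nonempty) (h : EqOn (evalEuclidean P) 0 U) : P = 0 := by
  obtain ⟨x₀, hx₀⟩ := hne
  have hzero : EqOn (evalEuclidean P) 0 univ :=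
    (analyticOnNhd_evalEuclidean P).eqOn_zero_of_preconnected_of_eventuallyEq_zero
      isPreconnected_univ (mem_univ x₀) (Filter.eventually_of_mem (hU.mem_nhds hx₀) h)
  exact MvPolynomial.funext fun y => by
    simpa [evalEuclidean] using hzero (mem_univ ((EuclideanSpace.equiv (Fin d) ℝ).symm y))

theorem exists_evalEuclidean_eq_of_affineMap (f : Evec d →ᵃ[ℝ] ℝ) :
    ∃ g : MvPolynomial (Fin d) ℝ, g.totalDegree ≤ 1 ∧ evalEuclidean g = f := by
  refine ⟨MvPolynomial.C (f 0) +
    ∑ j, MvPolynomial.C (f.linear (EuclideanSpace.single j 1)) * MvPolynomial.X j, ?_, ?_⟩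
  · refine (MvPolynomial.totalDegree_add _ _).trans (max_le (by simp) ?_)
    refine (MvPolynomial.totalDegree_finsetSum _ _).trans (Finset.sup_le fun j _ => ?_)
    refine (MvPolynomial.totalDegree_mul _ _).trans ?_
    simp
  · funext x
    have hx : x = ∑ j, x j • EuclideanSpace.single j (1 : ℝ) := by
      simpa using ((EuclideanSpace.basisFun (Fin d) ℝ).sum_repr x).symm
    conv_rhs => rw [f.decomp, Pi.add_apply, hx]
    simp [evalEuclidean, add_comm, mul_comm]

theorem exists_evalEuclidean_eq_comp_affineMap (A : Evec d →ᵃ[ℝ] Evec d)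
    (P : MvPolynomial (Fin d) ℝ) :
    ∃ Q : MvPolynomial (Fin d) ℝ, Q.totalDegree ≤ P.totalDegree ∧
      evalEuclidean Q = evalEuclidean P ∘ A := by
  choose g hg_deg hg_eval using fun i =>
    exists_evalEuclidean_eq_of_affineMap
      ((EuclideanSpace.proj i : Evec d →L[ℝ] ℝ).toLinearMap.toAffineMap.comp A)
  refine ⟨MvPolynomial.aeval g P, by simpa using MvPolynomial.totalDegree_aeval_le hg_deg P, ?_⟩
  funext x
  have hcoord : ∀ i, MvPolynomial.eval (fun j => x j) (g i) = A x i :=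
    fun i => congrFun (hg_eval i) x
  show MvPolynomial.aeval (fun j => x j) (MvPolynomial.aeval g P) = _
  rw [MvPolynomial.comp_aeval_apply]
  simp [evalEuclidean, hcoord]

variable {K : Set (Evec d)} {w : Evec d → ℝ}

theorem integral_evalEuclidean_sq_mul_pos (hK : IsCompact K) (hK_int : (interior K).Nonempty)
    (hw : Continuous w) (hw_nonneg : ∀ x ∈ K, 0 ≤ w x) (hw_pos : ∀ x ∈ interior K, 0 < w x)
    {P : MvPolynomial (Fin d) ℝ} (hP : P ≠ 0) :
    0 < ∫ x in K, evalEuclidean P x ^ 2 * w x := by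
  have hint : IntegrableOn (fun x => evalEuclidean P x ^ 2 * w x) K :=
    (((continuous_evalEuclidean P).pow 2).mul hw).continuousOn.integrableOn_compact hK
  have hnonneg : 0 ≤ᵐ[volume.restrict K] fun x => evalEuclidean P x ^ 2 * w x :=
    (ae_restrict_iff' hK.measurableSet).2 <|
      ae_of_all _ fun x hx => mul_nonneg (sq_nonneg _) (hw_nonneg x hx)
  rw [setIntegral_pos_iff_support_of_nonneg_ae hnonneg hint]
  obtain ⟨x₀, hx₀, hPx₀⟩ : ∃ x₀ ∈ interior K, evalEuclidean P x₀ ≠ 0 := by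
    by_contra! h
    exact hP (eq_zero_of_evalEuclidean_eqOn_zero isOpen_interior hK_int h)
  refine ((isOpen_interior.inter (continuous_evalEuclidean P).isOpen_support).measure_pos
    volume ⟨x₀, hx₀, hPx₀⟩).trans_le (measure_mono ?_)
  rintro x ⟨hxK, hPx⟩
  exact ⟨mul_ne_zero (pow_ne_zero 2 hPx) (hw_pos x hxK).ne', interior_subset hxK⟩

theorem continuous_integral_evalEuclidean_sq_mul {n : ℕ}
    (Φ : (Fin n → ℝ) →ₗ[ℝ] MvPolynomial (Fin d) ℝ) (hK : IsCompact K) (hw : Continuous w) :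
    Continuous fun c => ∫ x in K, evalEuclidean (Φ c) x ^ 2 * w x := by
  obtain ⟨e, he_cont, hΦ_eval⟩ : ∃ e : Fin n → Evec d → ℝ, (∀ i, Continuous (e i)) ∧
      ∀ c x, evalEuclidean (Φ c) x = ∑ i, c i * e i x := by
    refine ⟨fun i => evalEuclidean (Φ (Pi.single i 1)),
      fun i => continuous_evalEuclidean _, fun c x => ?_⟩
    conv_lhs => rw [← (Pi.basisFun ℝ _).sum_repr c]
    simp only [map_sum, map_smul, Pi.basisFun_repr, Pi.basisFun_apply, evalEuclidean,
      MvPolynomial.smul_eval]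
  refine continuous_parametric_integral_of_continuous ?_ hK
  simp only [Function.uncurry_def, hΦ_eval]
  fun_prop

theorem integral_evalEuclidean_smul_sq_mul (t : ℝ) (P : MvPolynomial (Fin d) ℝ) :
    ∫ x in K, evalEuclidean (t • P) x ^ 2 * w x =
      t ^ 2 * ∫ x in K, evalEuclidean P x ^ 2 * w x := by
  simp only [evalEuclidean, MvPolynomial.smul_eval, ← integral_const_mul]
  congr 1 with x
  ring

theorem exists_integral_evalEuclidean_sq_le_mul (hK : IsCompact K)
    (hK_int : (interior K).Nonempty) (hw : Continuous w) (hw_nonneg : ∀ x ∈ K, 0 ≤ w x)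
    (hw_pos : ∀ x ∈ interior K, 0 < w x) (k : ℕ) :
    ∃ C > 0, ∀ P : MvPolynomial (Fin d) ℝ, P.totalDegree ≤ k →
      ∫ x in K, evalEuclidean P x ^ 2 ≤ C * ∫ x in K, evalEuclidean P x ^ 2 * w x := by
  set V := MvPolynomial.restrictTotalDegree (Fin d) ℝ k
  set B := Module.finBasis ℝ V
  set Φ : (Fin (Module.finrank ℝ V) → ℝ) →ₗ[ℝ] MvPolynomial (Fin d) ℝ :=
    V.subtype ∘ₗ B.equivFun.symm.toLinearMap
  have hΦ : Function.Injective Φ := V.injective_subtype.comp B.equivFun.symm.injective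
  obtain ⟨C, hC, hle⟩ := exists_le_mul_of_sq_homogeneous
    (continuous_integral_evalEuclidean_sq_mul Φ hK (w := fun _ => 1) continuous_const)
    (continuous_integral_evalEuclidean_sq_mul Φ hK hw)
    (fun t c => by simp only [map_smul, integral_evalEuclidean_smul_sq_mul])
    (fun t c => by simp only [map_smul, integral_evalEuclidean_smul_sq_mul])
    fun c hc => integral_evalEuclidean_sq_mul_pos hK hK_int hw hw_nonneg hw_pos
      ((hΦ.ne_iff' (map_zero Φ)).2 hc)
  refine ⟨C, hC, fun P hP => ?_⟩
  set c := B.equivFun ⟨P, (MvPolynomial.mem_restrictTotalDegree _ _ _).2 hP⟩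
  have hΦP : Φ c = P := by
    simp only [Φ, c, LinearMap.coe_comp, Function.comp_apply, LinearEquiv.coe_coe,
      LinearEquiv.symm_apply_apply, Submodule.subtype_apply]
  simpa only [hΦP, mul_one] using hle c

end EvalEuclidean

section Simplex

variable {d : ℕ}

theorem integral_sq_mul_bubbleK_le (b : AffineBasis (Fin (d + 1)) ℝ (Evec d)) {f : Evec d → ℝ}
    (hf : Continuous f) :
    ∫ x in convexHull ℝ (range b), f x ^ 2 * bubbleK b x ≤
      ∫ x in convexHull ℝ (range b), f x ^ 2 := by
  have hK : IsCompact (convexHull ℝ (range b)) := (finite_range b).isCompact_convexHull (𝕜 := ℝ)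
  refine setIntegral_mono_on ?_ ?_ hK.measurableSet
    fun x hx => mul_le_of_le_one_right (sq_nonneg _) (bubbleK_le_one hx)
  · exact ((hf.pow 2).mul (continuous_bubbleK b)).continuousOn.integrableOn_compact hK
  · exact (hf.pow 2).continuousOn.integrableOn_compact hK

theorem exists_mul_integral_sq_le_integral_sq_mul_bubbleK (k : ℕ) :
    ∃ c > 0, ∀ (b : AffineBasis (Fin (d + 1)) ℝ (Evec d)) (P : MvPolynomial (Fin d) ℝ),
      P.totalDegree ≤ k →
        c * ∫ x in convexHull ℝ (range b), evalEuclidean P x ^ 2 ≤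
          ∫ x in convexHull ℝ (range b), evalEuclidean P x ^ 2 * bubbleK b x := by
  obtain ⟨b₀⟩ : Nonempty (AffineBasis (Fin (d + 1)) ℝ (Evec d)) :=
    AffineBasis.exists_affineBasis_of_finiteDimensional (by simp)
  have hK₀ : IsCompact (convexHull ℝ (range b₀)) := (finite_range b₀).isCompact_convexHull (𝕜 := ℝ)
  obtain ⟨C, hC, hC_ref⟩ := exists_integral_evalEuclidean_sq_le_mul hK₀
    ⟨_, b₀.centroid_mem_interior_convexHull⟩ (continuous_bubbleK b₀)
    (fun _ hx => bubbleK_nonneg hx) (fun _ hx => bubbleK_pos hx) k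
  refine ⟨C⁻¹, inv_pos.2 hC, fun b P hP => ?_⟩
  obtain ⟨Q, hQ_deg, hQ⟩ := exists_evalEuclidean_eq_comp_affineMap (b₀.transport b) P
  have hchange (g : Evec d → ℝ) : ∫ x in convexHull ℝ (range b), g x =
      |LinearMap.det (b₀.transport b).linear| *
        ∫ x in convexHull ℝ (range b₀), g (b₀.transport b x) := by
    rw [← b₀.image_transport_convexHull b]
    exact integral_image_affineMap volume hK₀.measurableSet (b₀.transport_injective b) g
  simp only [hchange, bubbleK_transport, ← Function.comp_apply (f := evalEuclidean P), ← hQ]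
  rw [mul_left_comm]
  gcongr
  exact (inv_mul_le_iff₀ hC).2 (hC_ref Q (hQ_deg.trans hP))

end Simplex

theorem bubble_norm_equivalence_general {d : ℕ} (k : ℕ) (σ₀ : ℝ) :
    ∃ c₁ > 0, ∃ c₂ > 0, ∀ b : AffineBasis (Fin (d + 1)) ℝ (Evec d),
      ∀ K : Set (Evec d), K = convexHull ℝ (Set.range ⇑b) →
      (∃ x r, 0 < r ∧ ball x r ⊆ K ∧ Metric.diam K ≤ σ₀ * (2 * r)) →
      ∀ P : MvPolynomial (Fin d) ℝ, P.totalDegree ≤ k →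
        (c₁ * Real.sqrt (∫ x in K, (MvPolynomial.eval (fun i => x i) P)^2) ≤
          Real.sqrt (∫ x in K,
            (MvPolynomial.eval (fun i => x i) P * Real.sqrt (bubbleK b x))^2)) ∧
        (Real.sqrt (∫ x in K,
            (MvPolynomial.eval (fun i => x i) P * Real.sqrt (bubbleK b x))^2) ≤
          c₂ * Real.sqrt (∫ x in K, (MvPolynomial.eval (fun i => x i) P)^2)) := by
  obtain ⟨c, hc, hlower⟩ := exists_mul_integral_sq_le_integral_sq_mul_bubbleK (d := d) k
  refine ⟨√c, Real.sqrt_pos.2 hc, 1, one_pos, fun b K hK _ P hP => ?_⟩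
  subst hK
  have hweighted : ∫ x in convexHull ℝ (range b),
      (MvPolynomial.eval (fun i => x i) P * √(bubbleK b x)) ^ 2 =
        ∫ x in convexHull ℝ (range b), evalEuclidean P x ^ 2 * bubbleK b x :=
    setIntegral_congr_fun ((finite_range b).isCompact_convexHull (𝕜 := ℝ)).measurableSet
      fun x hx => by rw [mul_pow, Real.sq_sqrt (bubbleK_nonneg hx), evalEuclidean]
  rw [hweighted, one_mul, ← Real.sqrt_mul hc.le]
  exact ⟨Real.sqrt_le_sqrt (hlower b P hP),
    Real.sqrt_le_sqrt (integral_sq_mul_bubbleK_le b (continuous_evalEuclidean P))⟩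

/-- bubble function norm equivalence
`c₁‖φ‖_{L²(K)} ≤ ‖φ b_K^{1/2}‖_{L²(K)} ≤ c₂‖φ‖_{L²(K)}` for `φ ∈ ℙ^k(K)`. -/
theorem bubble_norm_equivalence {d : ℕ} (hd : 0 < d) (k : ℕ) (σ₀ : ℝ) (hσ₀ : 0 < σ₀) :
    ∃ c₁ > 0, ∃ c₂ > 0, ∀ b : AffineBasis (Fin (d + 1)) ℝ (Evec d),
      ∀ K : Set (Evec d), K = convexHull ℝ (Set.range ⇑b) →
      (∃ x r, 0 < r ∧ ball x r ⊆ K ∧ Metric.diam K ≤ σ₀ * (2 * r)) →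
      ∀ P : MvPolynomial (Fin d) ℝ, P.totalDegree ≤ k →
        (c₁ * Real.sqrt (∫ x in K, (MvPolynomial.eval (fun i => x i) P)^2) ≤
          Real.sqrt (∫ x in K,
            (MvPolynomial.eval (fun i => x i) P * Real.sqrt (bubbleK b x))^2)) ∧
        (Real.sqrt (∫ x in K,
            (MvPolynomial.eval (fun i => x i) P * Real.sqrt (bubbleK b x))^2) ≤
          c₂ * Real.sqrt (∫ x in K, (MvPolynomial.eval (fun i => x i) P)^2)) :=
  bubble_norm_equivalence_general k σ₀
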